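/- arXiv:1907.00235 — 9 statements merged into one kernel-verified Lean document; each statement's English description precedes it below -/
import Mathlib

section
/- For all natural numbers j and l with 1 ≤ j ≤ l, there exists a strict-step LogSparse path from j to l with at most ⌊log₂ l⌋ + 1 edges; that is, there is a list p₀ = j, p₁, …, p_k = l with k ≤ Nat.log 2 l + 1 such that for every i < k there exists m ≤ Nat.log 2 (p_{i+1}) with p_{i+1} = p_i + 2^m. -/
/-- A strict-step LogSparse path from `j` to `l`: a nonempty list of cells starting at `j`,
ending at `l`, such that each step adds a power of two `2 ^ m` with
`m ≤ Nat.log 2` of the target cell. The number of edges of the path `p` is `p.length - 1`. -/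
def IsLogSparsePath (j l : ℕ) (p : List ℕ) : Prop :=
  p ≠ [] ∧ p.head? = some j ∧ p.getLast? = some l ∧
    ∀ i : ℕ, i + 1 < p.length →
      ∃ m ≤ Nat.log 2 (p.getD (i + 1) 0), p.getD (i + 1) 0 = p.getD i 0 + 2 ^ m

lemma logSparse_aux : ∀ d j : ℕ, ∃ p : List ℕ, p ≠ [] ∧ p.head? = some j ∧
    p.getLast? = some (j + d) ∧ p.length ≤ Nat.log 2 (2 * d) + 1 ∧
    ∀ i : ℕ, i + 1 < p.length → ∃ m, p.getD (i + 1) 0 = p.getD i 0 + 2 ^ m := by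
  intro d
  induction d using Nat.strong_induction_on with
  | _ d ih =>
    intro j
    rcases Nat.eq_zero_or_pos d with h0 | hd
    · subst h0
      exact ⟨[j], by simp, by simp, by simp, by simp, by simp⟩
    · set M := Nat.log 2 d with hM
      have hpow : 2 ^ M ≤ d := Nat.pow_log_le_self 2 hd.ne'
      have hposM : 0 < 2 ^ M := pow_pos (by norm_num) _
      have hlt : d - 2 ^ M < d := Nat.sub_lt hd hposM
      obtain ⟨p, hne, hh, hl, hlen, hstep⟩ := ih (d - 2 ^ M) hlt (j + 2 ^ M)
      obtain ⟨a, t, rfl⟩ : ∃ a t, p = a :: t := by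
        cases p with
        | nil => exact absurd rfl hne
        | cons a t => exact ⟨a, t, rfl⟩
      have ha : a = j + 2 ^ M := by simpa using hh
      refine ⟨j :: a :: t, by simp, by simp, ?_, ?_, ?_⟩
      · rw [List.getLast?_cons_cons, hl]
        congr 1
        omega
      · -- length bound
        have h2d : Nat.log 2 (2 * d) = M + 1 := by
          rw [mul_comm, Nat.log_mul_base (by norm_num) hd.ne']
        rcases Nat.eq_zero_or_pos (d - 2 ^ M) with h0' | hd'
        · rw [h0'] at hlen
          have hz : Nat.log 2 (2 * 0) = 0 := by simp
          simp only [List.length_cons] at hlen ⊢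
          omega
        · have h2 := Nat.lt_pow_succ_log_self (b := 2) (by norm_num) d
          rw [← hM, pow_succ] at h2
          have hlog' : Nat.log 2 (d - 2 ^ M) < M :=
            Nat.log_lt_of_lt_pow hd'.ne' (by omega)
          have h2d' : Nat.log 2 (2 * (d - 2 ^ M)) = Nat.log 2 (d - 2 ^ M) + 1 := by
            rw [mul_comm, Nat.log_mul_base (by norm_num) hd'.ne']
          rw [h2d'] at hlen
          simp only [List.length_cons] at hlen ⊢
          omega
      · intro i hi
        cases i with
        | zero =>
          refine ⟨M, ?_⟩
          simp [ha]
        | succ n =>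
          have := hstep n (by simpa using Nat.lt_of_succ_lt_succ hi)
          simpa using this

/-- Theorem 1 (first part): for `1 ≤ j ≤ l` there is a strict-step LogSparse path
from cell `j` to cell `l` with at most `⌊log₂ l⌋ + 1` edges. -/
theorem exists_logSparsePath_le_log_add_one (j l : ℕ) (hj : 1 ≤ j) (hjl : j ≤ l) :
    ∃ k ≤ Nat.log 2 l + 1, ∃ p : List ℕ, p.length = k + 1 ∧ IsLogSparsePath j l p := by
  obtain ⟨p, hne, hh, hl, hlen, hstep⟩ := logSparse_aux (l - j) j
  have hjd : j + (l - j) = l := by omega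
  rw [hjd] at hl
  refine ⟨p.length - 1, ?_, p, ?_, hne, hh, hl, ?_⟩
  · -- p.length - 1 ≤ Nat.log 2 l + 1
    have hmono : Nat.log 2 (2 * (l - j)) ≤ Nat.log 2 (2 * l) :=
      Nat.log_mono_right (by omega)
    have h2l : Nat.log 2 (2 * l) = Nat.log 2 l + 1 := by
      rw [mul_comm, Nat.log_mul_base (by norm_num) (by omega)]
    omega
  · have : 1 ≤ p.length := List.length_pos_iff.mpr hne
    omega
  · intro i hi
    obtain ⟨m, hm⟩ := hstep i hi
    refine ⟨m, ?_, hm⟩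
    have hle : 2 ^ m ≤ p.getD (i + 1) 0 := by
      rw [hm]; exact Nat.le_add_left _ _
    have hne0 : p.getD (i + 1) 0 ≠ 0 := by
      rw [hm]
      exact (Nat.add_pos_right _ (pow_pos (by norm_num) m)).ne'
    exact (Nat.le_log_iff_pow_le (by norm_num) hne0).mpr hle
end

section
/- For all natural numbers j and l with 1 ≤ j < l, there exists a strict-step LogSparse path from j to l with at most ⌊log₂ (l − j)⌋ + 1 edges, i.e., at most Nat.log 2 (l − j) + 1 edges. -/
lemma logSparse_aux_s1 : ∀ d : ℕ, ∀ j l : ℕ, 1 ≤ j → j < l → l - j = d →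
    ∃ k ≤ Nat.log 2 d + 1, ∃ p : List ℕ, p.length = k + 1 ∧ IsLogSparsePath j l p := by
  intro d
  induction d using Nat.strong_induction_on with
  | _ d ih =>
    intro j l hj hjl hd
    have hd1 : 1 ≤ d := by omega
    set m := Nat.log 2 d with hm
    have hpow : 2 ^ m ≤ d := Nat.pow_log_le_self 2 (by omega)
    have hlt : d < 2 ^ (m + 1) := Nat.lt_pow_succ_log_self (by norm_num) d
    have hj' : j + 2 ^ m ≤ l := by omega
    have hpm1 : 1 ≤ 2 ^ m := Nat.one_le_two_pow
    rcases eq_or_lt_of_le hj' with heq | hlt'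
    · refine ⟨1, by omega, [j, l], rfl, ?_⟩
      refine ⟨by simp, rfl, rfl, ?_⟩
      intro i hi
      have hi0 : i = 0 := by simp at hi; omega
      subst hi0
      refine ⟨m, ?_, by simp [← heq]⟩
      have h2 : 2 ^ m ≤ l := by omega
      have hg : [j, l].getD (0 + 1) 0 = l := by simp
      rw [hg]
      exact (Nat.le_log_iff_pow_le (by norm_num) (by omega)).mpr h2
    · have hd' : l - (j + 2 ^ m) < d := by omega
      obtain ⟨k', hk', p', hp'len, hp'ne, hp'head, hp'last, hp'step⟩ :=
        ih (l - (j + 2 ^ m)) hd' (j + 2 ^ m) l (by omega) hlt' rfl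
      have hlog' : Nat.log 2 (l - (j + 2 ^ m)) < m := by
        have h3 : l - (j + 2 ^ m) < 2 ^ m := by omega
        exact Nat.log_lt_of_lt_pow (by omega) h3
      obtain ⟨a, t, rfl⟩ := List.exists_cons_of_ne_nil hp'ne
      have ha : a = j + 2 ^ m := by simpa using hp'head
      refine ⟨k' + 1, by omega, j :: a :: t, by simp_all, ?_⟩
      refine ⟨by simp, rfl, ?_, ?_⟩
      · rw [List.getLast?_cons_cons]; exact hp'last
      · intro i hi
        cases i with
        | zero =>
          refine ⟨m, ?_, by simp [ha]⟩
          have h2 : 2 ^ m ≤ a := by omega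
          have hg : (j :: a :: t).getD (0 + 1) 0 = a := by simp
          rw [hg]
          exact (Nat.le_log_iff_pow_le (by norm_num) (by omega)).mpr h2
        | succ i =>
          have hstep := hp'step i (by simp at hi ⊢; omega)
          simpa using hstep

/-- For `1 ≤ j < l` there is a strict-step LogSparse path from cell `j` to cell `l`
with at most `⌊log₂ (l - j)⌋ + 1` edges. -/
theorem exists_logSparsePath_le_log_sub_add_one (j l : ℕ) (hj : 1 ≤ j) (hjl : j < l) :
    ∃ k ≤ Nat.log 2 (l - j) + 1, ∃ p : List ℕ, p.length = k + 1 ∧ IsLogSparsePath j l p :=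
  logSparse_aux_s1 (l - j) j l hj hjl rfl
end

section
/- For all natural numbers j and l with 1 ≤ j < l, there exists a strict-step LogSparse path from j to l with exactly popCount (l − j) edges, where popCount (l − j) is the number of ones in the binary representation of l − j. -/
/-- `popCount n` is the number of ones in the binary representation of `n`. -/
def popCount (n : ℕ) : ℕ := (Nat.digits 2 n).count 1

lemma length_bitIndices (n : ℕ) : n.bitIndices.length = popCount n := by
  induction n using Nat.strong_induction_on with
  | _ n ih =>
    rcases Nat.eq_zero_or_pos n with rfl | hn
    · simp [popCount]
    rcases Nat.even_or_odd n with ⟨k, hk⟩ | ⟨k, hk⟩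
    · subst hk
      have hk0 : 0 < k := by omega
      rw [show k + k = 2 * k by ring, Nat.bitIndices_two_mul]
      simp [popCount, Nat.digits_def' (by norm_num : 1 < 2) (by omega : 0 < 2*k),
        Nat.mul_div_cancel_left k (by norm_num : 0 < 2)]
      have := ih k (by omega)
      simpa [popCount] using this
    · subst hk
      rw [Nat.bitIndices_two_mul_add_one]
      simp [popCount, Nat.digits_def' (by norm_num : 1 < 2) (by omega : 0 < 2*k+1),
        Nat.add_mul_div_left, Nat.mul_add_div, Nat.mul_add_mod, List.count_cons]
      have := ih k (by omega)
      simp [popCount] at this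
      omega

lemma aux_path (ms : List ℕ) : ∀ j : ℕ, 1 ≤ j →
    ∃ p : List ℕ, p.length = ms.length + 1 ∧
      IsLogSparsePath j (j + (ms.map (2 ^ ·)).sum) p := by
  induction ms with
  | nil => intro j hj; exact ⟨[j], by simp, by simp, by simp, by simp, by simp⟩
  | cons m rest ih =>
    intro j hj
    have hpow : 0 < 2 ^ m := pow_pos (by norm_num) m
    obtain ⟨p, hlen, hne, hhead, hlast, hstep⟩ := ih (j + 2 ^ m) (by omega)
    have hp0 : p.getD 0 0 = j + 2 ^ m := by
      cases p with
      | nil => simp at hne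
      | cons a t => simp at hhead; simpa using hhead
    refine ⟨j :: p, by simp [hlen], by simp, by simp, ?_, ?_⟩
    · cases p with
      | nil => simp at hne
      | cons a t =>
        rw [List.getLast?_cons_cons, hlast]
        congr 1
        simp
        ring
    · intro i hi
      match i with
      | 0 =>
        have h1 : (j :: p).getD 1 0 = j + 2 ^ m := by simpa using hp0
        refine ⟨m, ?_, by simp only [List.getD_cons_succ, List.getD_cons_zero]; exact hp0⟩
        rw [h1, Nat.le_log_iff_pow_le (by norm_num) (by omega)]
        omega
      | Nat.succ i =>
        have hi' : i + 1 < p.length := by simp at hi; omega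
        have := hstep i hi'
        simpa using this

/-- For `1 ≤ j < l` there is a strict-step LogSparse path from cell `j` to cell `l`
with exactly `popCount (l - j)` edges. -/
theorem exists_logSparsePath_popCount (j l : ℕ) (hj : 1 ≤ j) (hjl : j < l) :
    ∃ p : List ℕ, p.length = popCount (l - j) + 1 ∧ IsLogSparsePath j l p := by
  obtain ⟨p, hlen, hp⟩ := aux_path (l - j).bitIndices j hj
  refine ⟨p, by rw [hlen, length_bitIndices], ?_⟩
  have hsum : (((l - j).bitIndices).map (2 ^ ·)).sum = l - j :=
    Nat.twoPowSum_bitIndices _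
  rwa [hsum, Nat.add_sub_cancel' hjl.le] at hp
end

section
/- For all natural numbers j and l with 1 ≤ j < l, letting s = popCount (l − j) be the number of ones in the binary representation of l − j, there exist at least s! pairwise distinct strict-step LogSparse paths from j to l, each with exactly s edges; formally, there is a finite set of lists of cardinality s! each of whose members is a strict-step LogSparse path from j to l of length s + 1. (This makes precise the claim that the number of feasible unique paths from cell j to cell l grows at rate O(⌊log₂(l−j)⌋!).) -/
private def f : ℕ → ℕ → ℕ := fun acc m => acc + 2 ^ m

private lemma scanl_cons' (c : ℕ) (L : List ℕ) : ∃ t, List.scanl f c L = c :: t := by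
  cases L <;> simp [List.scanl]

private lemma popCount_eq_length_bitIndices (n : ℕ) :
    (Nat.digits 2 n).count 1 = n.bitIndices.length := by
  induction n using Nat.strong_induction_on with
  | _ n ih =>
    rcases Nat.eq_zero_or_pos n with h | h
    · simp [h]
    rw [Nat.digits_def' (by norm_num) h]
    have hd : n / 2 < n := Nat.div_lt_self h (by norm_num)
    have := ih (n / 2) hd
    rcases Nat.even_or_odd n with ⟨m, hm⟩ | ⟨m, hm⟩
    · have hm' : n = 2 * m := by omega
      subst hm'
      have : 2 * m / 2 = m := by omega
      rw [this] at *
      simp [Nat.bitIndices_two_mul, List.count_cons, ih m (by omega), Nat.mul_mod_right]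
    · subst hm
      have : (2 * m + 1) / 2 = m := by omega
      rw [this] at *
      simp [Nat.bitIndices_two_mul_add_one, List.count_cons, ih m (by omega), Nat.mul_add_mod]

private lemma scanl_spec (L : List ℕ) : ∀ c : ℕ, 1 ≤ c →
    IsLogSparsePath c (c + (L.map (2 ^ ·)).sum) (List.scanl f c L) := by
  induction L with
  | nil =>
    intro c hc
    refine ⟨by simp [List.scanl], by simp [List.scanl], by simp [List.scanl], ?_⟩
    intro i hi
    simp [List.scanl] at hi
  | cons a L ih =>
    intro c hc
    obtain ⟨t, ht⟩ := scanl_cons' (f c a) L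
    have hc' : 1 ≤ f c a := le_trans hc (Nat.le_add_right _ _)
    obtain ⟨hne, hhead, hlast, hstep⟩ := ih (f c a) hc'
    rw [List.scanl_cons]
    refine ⟨by simp, by simp, ?_, ?_⟩
    · rw [ht, List.getLast?_cons_cons, ← ht, hlast]
      simp [f, List.map_cons, List.sum_cons]
      omega
    · intro i hi
      cases i with
      | zero =>
        refine ⟨a, ?_, ?_⟩
        · rw [ht]
          simp only [List.getD_cons_succ, List.getD_cons_zero]
          refine (Nat.le_log_iff_pow_le (by norm_num) (by positivity)).mpr ?_
          simp [f]
        · rw [ht]; simp [f]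
      | succ i =>
        simp only [List.getD_cons_succ]
        exact hstep i (by simpa [List.length_cons] using hi)

private lemma scanl_inj : ∀ (L1 L2 : List ℕ) (c : ℕ),
    List.scanl f c L1 = List.scanl f c L2 → L1 = L2 := by
  intro L1
  induction L1 with
  | nil =>
    intro L2 c h
    cases L2 with
    | nil => rfl
    | cons b t =>
      exfalso
      have := congrArg List.length h
      simp [List.length_scanl] at this
  | cons a t1 ih =>
    intro L2 c h
    cases L2 with
    | nil =>
      exfalso
      have := congrArg List.length h
      simp [List.length_scanl] at this
    | cons b t2 =>
      rw [List.scanl_cons, List.scanl_cons] at h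
      obtain ⟨u1, hu1⟩ := scanl_cons' (f c a) t1
      obtain ⟨u2, hu2⟩ := scanl_cons' (f c b) t2
      rw [hu1, hu2] at h
      have hab : f c a = f c b := by simpa using congrArg (List.getD · 1 0) h
      have hab' : a = b := by
        have : (2:ℕ) ^ a = 2 ^ b := by simpa [f] using hab
        exact Nat.pow_right_injective (by norm_num) this
      subst hab'
      have htail : List.scanl f (f c a) t1 = List.scanl f (f c a) t2 := by
        rw [hu1, hu2]; simpa using congrArg List.tail h
      rw [ih t2 (f c a) htail]

/-- For `1 ≤ j < l`, with `s = popCount (l - j)`, there are at least `s!` pairwise distinct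
strict-step LogSparse paths from `j` to `l`, each with exactly `s` edges. -/
theorem factorial_logSparsePaths (j l : ℕ) (hj : 1 ≤ j) (hjl : j < l) :
    ∃ S : Finset (List ℕ), S.card = Nat.factorial (popCount (l - j)) ∧
      ∀ p ∈ S, IsLogSparsePath j l p ∧ p.length = popCount (l - j) + 1 := by
  set d := l - j with hd
  set es := d.bitIndices with hes
  have hnodup : es.Nodup := Nat.bitIndices_sorted.nodup
  have hpclen : popCount d = es.length := popCount_eq_length_bitIndices d
  refine ⟨(es.permutations.map (List.scanl f j)).toFinset, ?_, ?_⟩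
  · rw [List.toFinset_card_of_nodup, List.length_map, List.length_permutations, hpclen]
    exact (List.nodup_permutations _ hnodup).map (fun L1 L2 h => scanl_inj L1 L2 j h)
  · intro p hp
    rw [List.mem_toFinset, List.mem_map] at hp
    obtain ⟨L, hL, rfl⟩ := hp
    have hperm : List.Perm L es := List.mem_permutations.mp hL
    have hsum : (L.map (2 ^ ·)).sum = d := by
      rw [(hperm.map (2 ^ ·)).sum_eq]
      exact Nat.twoPowSum_bitIndices d
    have hjd : j + d = l := by omega
    constructor
    · have := scanl_spec L j hj
      rwa [hsum, hjd] at this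
    · rw [List.length_scanl, hperm.length_eq, hpclen]
end

section
/- Define the information-propagation sets S : ℕ → ℕ → Set ℕ recursively by S 0 l = {l} and S (k+1) l = ⋃_{j ∈ I_l} S k j, where I_l = {l - 2^m : 0 ≤ m ≤ Nat.log 2 l} ∪ {l}. Then for every natural number l, S (Nat.log 2 l + 1) l = {j : j ≤ l}; that is, after stacking ⌊log₂ l⌋ + 1 LogSparse self-attention layers, cell l receives information from exactly the cells j with j ≤ l. -/
/-- The LogSparse attention index set of cell `l`:
`I_l = {l} ∪ {l - 2 ^ m : 0 ≤ m ≤ Nat.log 2 l}`. -/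
def attendSet (l : ℕ) : Set ℕ := {l} ∪ {j | ∃ m ≤ Nat.log 2 l, j = l - 2 ^ m}

/-- `infoSet k l` is the set of indices of all cells whose information has been passed
to cell `l` after `k` layers of LogSparse attention: `infoSet 0 l = {l}` and
`infoSet (k+1) l = ⋃_{j ∈ I_l} infoSet k j`. -/
def infoSet : ℕ → ℕ → Set ℕ
  | 0, l => {l}
  | k + 1, l => ⋃ j ∈ attendSet l, infoSet k j

lemma mem_attendSet_le {i l : ℕ} (h : i ∈ attendSet l) : i ≤ l := by
  rcases h with h | ⟨m, _, rfl⟩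
  · exact le_of_eq h
  · exact Nat.sub_le _ _

lemma self_mem_attendSet (l : ℕ) : l ∈ attendSet l := Or.inl rfl

lemma infoSet_subset (k : ℕ) : ∀ l, infoSet k l ⊆ {j : ℕ | j ≤ l} := by
  induction k with
  | zero => intro l j hj; exact le_of_eq hj
  | succ k ih =>
    intro l j hj
    simp only [infoSet, Set.mem_iUnion] at hj
    obtain ⟨i, hi, hji⟩ := hj
    exact le_trans (ih i hji) (mem_attendSet_le hi)

lemma mem_infoSet_of_close (k : ℕ) : ∀ l j, j ≤ l → l < j + 2 ^ k → j ∈ infoSet k l := by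
  induction k with
  | zero =>
    intro l j hj hlt
    have : l = j := le_antisymm (by omega) hj
    exact this.symm
  | succ k ih =>
    intro l j hj hlt
    simp only [infoSet, Set.mem_iUnion]
    by_cases hc : l < j + 2 ^ k
    · exact ⟨l, self_mem_attendSet l, ih l j hj hc⟩
    · push_neg at hc
      have h2k : 2 ^ k ≤ l := by omega
      have hm : k ≤ Nat.log 2 l :=
        (Nat.le_log_iff_pow_le one_lt_two (by omega)).mpr h2k
      refine ⟨l - 2 ^ k, Or.inr ⟨k, hm, rfl⟩, ih _ j (by omega) ?_⟩
      have : 2 ^ (k + 1) = 2 ^ k + 2 ^ k := by ring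
      omega

/-- After stacking `⌊log₂ l⌋ + 1` LogSparse self-attention layers, cell `l` receives
information from exactly the cells `j` with `j ≤ l`. -/
theorem infoSet_log_add_one (l : ℕ) :
    infoSet (Nat.log 2 l + 1) l = {j : ℕ | j ≤ l} := by
  apply le_antisymm (infoSet_subset _ l)
  intro j hj
  apply mem_infoSet_of_close _ _ _ hj
  rcases Nat.eq_zero_or_pos l with rfl | hl
  · simp
  · have := Nat.lt_pow_succ_log_self one_lt_two l
    omega
end

section
/- For every natural number l ≥ 1, the attention index set of cell l has exactly ⌊log₂ l⌋ + 2 elements: the finset ({l} ∪ {l - 2^m : 0 ≤ m ≤ Nat.log 2 l}) has cardinality Nat.log 2 l + 2. In particular each cell computes only O(log l) dot products per layer. -/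
/-- The LogSparse attention index set of cell `l`, as a finset:
`I_l = {l} ∪ {l - 2 ^ m : 0 ≤ m ≤ Nat.log 2 l}`. -/
def attendFinset (l : ℕ) : Finset ℕ :=
  {l} ∪ (Finset.range (Nat.log 2 l + 1)).image (fun m => l - 2 ^ m)

/-- For `l ≥ 1`, the attention index set of cell `l` has exactly `⌊log₂ l⌋ + 2` elements,
so each cell computes only `O(log l)` dot products per layer. -/
theorem attendFinset_card (l : ℕ) (hl : 1 ≤ l) :
    (attendFinset l).card = Nat.log 2 l + 2 := by
  have hpow : ∀ m ∈ Finset.range (Nat.log 2 l + 1), 2 ^ m ≤ l := by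
    intro m hm
    rw [Finset.mem_range, Nat.lt_succ_iff] at hm
    exact (Nat.le_log_iff_pow_le (by norm_num) (by omega)).1 hm
  have hinj : Set.InjOn (fun m => l - 2 ^ m) (Finset.range (Nat.log 2 l + 1)) := by
    intro a ha b hb hab
    have ha' := hpow a ha; have hb' := hpow b hb
    simp only at hab
    have h2 : (2:ℕ) ^ a = 2 ^ b := by omega
    exact Nat.pow_right_injective (by norm_num) h2
  rw [attendFinset, Finset.card_union_of_disjoint, Finset.card_image_of_injOn hinj]
  · simp; omega
  · rw [Finset.disjoint_singleton_left, Finset.mem_image]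
    rintro ⟨m, hm, hmeq⟩
    have h1 := hpow m hm
    have h2 : 1 ≤ 2 ^ m := Nat.one_le_two_pow
    omega
end

section
/- For every natural number L ≥ 1, the total number of query–key pairs computed in one layer of LogSparse attention over an input of length L is at most L·(⌊log₂ L⌋ + 2): formally, Σ_{l=1}^{L} |I_l| ≤ L * (Nat.log 2 L + 2), where |I_l| is the cardinality of the finset I_l. Hence the per-layer memory cost of LogSparse attention is O(L log L), in contrast to the Σ_{l=1}^{L} l = L(L+1)/2 pairs of full self-attention. -/
/-- For `L ≥ 1`, the total number of query–key pairs computed in one layer of LogSparse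
attention over an input of length `L` is at most `L * (⌊log₂ L⌋ + 2)`. -/
theorem sum_attendFinset_card_le (L : ℕ) (hL : 1 ≤ L) :
    ∑ l ∈ Finset.Icc 1 L, (attendFinset l).card ≤ L * (Nat.log 2 L + 2) := by
  calc ∑ l ∈ Finset.Icc 1 L, (attendFinset l).card
      ≤ ∑ l ∈ Finset.Icc 1 L, (Nat.log 2 L + 2) := by
        apply Finset.sum_le_sum
        intro l hl
        have hlL : l ≤ L := (Finset.mem_Icc.mp hl).2
        have h1 : (attendFinset l).card ≤ 1 + (Nat.log 2 l + 1) := by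
          calc (attendFinset l).card
              ≤ ({l} : Finset ℕ).card +
                ((Finset.range (Nat.log 2 l + 1)).image (fun m => l - 2 ^ m)).card :=
                Finset.card_union_le _ _
            _ ≤ 1 + (Nat.log 2 l + 1) := by
                have := Finset.card_image_le (s := Finset.range (Nat.log 2 l + 1))
                  (f := fun m => l - 2 ^ m)
                simp at this ⊢
                omega
        have h2 : Nat.log 2 l ≤ Nat.log 2 L := Nat.log_mono_right hlL
        omega
    _ = L * (Nat.log 2 L + 2) := by
        rw [Finset.sum_const, Nat.card_Icc]
        simp [Nat.mul_comm]
end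

section
/- For every natural number L ≥ 1, the total number of query–key pairs computed by a LogSparse Transformer with ⌊log₂ L⌋ + 1 stacked layers on an input of length L is at most L·(⌊log₂ L⌋ + 2)·(⌊log₂ L⌋ + 1): formally, (Nat.log 2 L + 1) * Σ_{l=1}^{L} |I_l| ≤ (Nat.log 2 L + 1) * L * (Nat.log 2 L + 2). Hence the total memory cost is O(L (log₂ L)²). -/
lemma attendFinset_card_le (l : ℕ) : (attendFinset l).card ≤ Nat.log 2 l + 2 := by
  calc (attendFinset l).card
      ≤ ({l} : Finset ℕ).card + ((Finset.range (Nat.log 2 l + 1)).image (fun m => l - 2 ^ m)).card :=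
        Finset.card_union_le _ _
    _ ≤ 1 + (Nat.log 2 l + 1) := by
        gcongr
        · exact le_of_eq (Finset.card_singleton l)
        · exact (Finset.card_image_le).trans (by simp)
    _ = Nat.log 2 l + 2 := by omega

/-- For `L ≥ 1`, the total number of query–key pairs computed by a LogSparse Transformer
with `⌊log₂ L⌋ + 1` stacked layers on an input of length `L` is at most
`L * (⌊log₂ L⌋ + 2) * (⌊log₂ L⌋ + 1)`, i.e. `O(L (log₂ L)²)` in total. -/
theorem total_memory_cost_le (L : ℕ) (hL : 1 ≤ L) :
    (Nat.log 2 L + 1) * ∑ l ∈ Finset.Icc 1 L, (attendFinset l).card ≤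
      (Nat.log 2 L + 1) * L * (Nat.log 2 L + 2) := by
  have hsum : ∑ l ∈ Finset.Icc 1 L, (attendFinset l).card ≤ L * (Nat.log 2 L + 2) := by
    calc ∑ l ∈ Finset.Icc 1 L, (attendFinset l).card
        ≤ ∑ l ∈ Finset.Icc 1 L, (Nat.log 2 L + 2) := by
          apply Finset.sum_le_sum
          intro l hl
          exact (attendFinset_card_le l).trans
            (by gcongr; exact (Finset.mem_Icc.mp hl).2)
      _ = L * (Nat.log 2 L + 2) := by simp [Nat.card_Icc]
  calc (Nat.log 2 L + 1) * ∑ l ∈ Finset.Icc 1 L, (attendFinset l).card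
      ≤ (Nat.log 2 L + 1) * (L * (Nat.log 2 L + 2)) := by gcongr
    _ = (Nat.log 2 L + 1) * L * (Nat.log 2 L + 2) := by ring
end

section
/- For all natural numbers j and l with 1 ≤ j ≤ l, the minimum number of edges over all strict-step LogSparse paths from j to l is at most ⌊log₂ l⌋ + 1: formally, min{k : there exists a strict-step LogSparse path from j to l with k edges} ≤ max_{j' < l} (Nat.log 2 (l − j') + 1) ≤ Nat.log 2 l + 1. -/
lemma cons_logSparsePath (j j' l m : ℕ) (p : List ℕ)
    (hp : IsLogSparsePath j' l p) (hj' : j' = j + 2 ^ m) (hm : m ≤ Nat.log 2 j') :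
    IsLogSparsePath j l (j :: p) := by
  obtain ⟨hne, hhead, hlast, hstep⟩ := hp
  obtain ⟨a, t, rfl⟩ : ∃ a t, p = a :: t := by
    cases p with
    | nil => exact absurd rfl hne
    | cons a t => exact ⟨a, t, rfl⟩
  have ha : a = j' := by simpa using hhead
  subst ha
  refine ⟨by simp, by simp, by simpa using hlast, ?_⟩
  intro i hi
  cases i with
  | zero => exact ⟨m, by simpa using hm, by simp [hj']⟩
  | succ k =>
      have hk : k + 1 < (a :: t).length := by simpa using hi
      simpa using hstep k hk

lemma exists_logSparsePath (d : ℕ) : ∀ j : ℕ, 1 ≤ j → 1 ≤ d →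
    ∃ k ≤ Nat.log 2 d + 1, ∃ p, IsLogSparsePath j (j + d) p ∧ p.length = k + 1 := by
  induction d using Nat.strong_induction_on with
  | _ d ih =>
    intro j hj hd
    set m := Nat.log 2 d with hm
    have h2 : 2 ^ m ≤ d := Nat.pow_log_le_self 2 (by omega)
    have h2pos : 1 ≤ 2 ^ m := Nat.one_le_two_pow
    by_cases hcase : 2 ^ m = d
    · refine ⟨1, by omega, [j, j + d], ⟨by simp, by simp, by simp, ?_⟩, by simp⟩
      intro i hi
      have hi0 : i = 0 := by simp at hi; omega
      subst hi0
      refine ⟨m, ?_, by simp [← hcase]⟩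
      calc m = Nat.log 2 (2 ^ m) := (Nat.log_pow one_lt_two m).symm
        _ ≤ Nat.log 2 (j + d) := Nat.log_mono_right (by omega)
    · set d' := d - 2 ^ m with hd'def
      have hd' : 1 ≤ d' := by omega
      have hdlt : d < 2 ^ (m + 1) := Nat.lt_pow_succ_log_self one_lt_two d
      have hlt : d' < 2 ^ m := by
        have : 2 ^ (m + 1) = 2 ^ m + 2 ^ m := by ring
        omega
      obtain ⟨k, hk, p, hp, hlen⟩ := ih d' (by omega) (j + 2 ^ m) (by omega) hd'
      have heq : j + 2 ^ m + d' = j + d := by omega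
      have hklog : Nat.log 2 d' < m := Nat.log_lt_of_lt_pow (by omega) hlt
      refine ⟨k + 1, by omega, j :: p, ?_, by simp [hlen]⟩
      refine cons_logSparsePath j (j + 2 ^ m) (j + d) m p (heq ▸ hp) rfl ?_
      calc m = Nat.log 2 (2 ^ m) := (Nat.log_pow one_lt_two m).symm
        _ ≤ Nat.log 2 (j + 2 ^ m) := Nat.log_mono_right (by omega)

/-- For `1 ≤ j ≤ l`, the minimum number of edges over all strict-step LogSparse paths
from `j` to `l` is at most `max_{j' < l} (⌊log₂ (l - j')⌋ + 1)`, which in turn is at most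
`⌊log₂ l⌋ + 1`. -/
theorem min_path_length_le (j l : ℕ) (hj : 1 ≤ j) (hjl : j ≤ l) :
    sInf {k : ℕ | ∃ p : List ℕ, IsLogSparsePath j l p ∧ p.length = k + 1} ≤
        (Finset.range l).sup (fun j' => Nat.log 2 (l - j') + 1) ∧
      (Finset.range l).sup (fun j' => Nat.log 2 (l - j') + 1) ≤ Nat.log 2 l + 1 := by
  constructor
  · rcases eq_or_lt_of_le hjl with rfl | hlt
    · have h0 : (0 : ℕ) ∈ {k : ℕ | ∃ p : List ℕ, IsLogSparsePath j j p ∧ p.length = k + 1} :=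
        ⟨[j], ⟨by simp, by simp, by simp, by intro i hi; simp at hi⟩, by simp⟩
      exact le_trans (Nat.sInf_le h0) (Nat.zero_le _)
    · obtain ⟨k, hk, p, hp, hlen⟩ := exists_logSparsePath (l - j) j hj (by omega)
      have heq : j + (l - j) = l := by omega
      rw [heq] at hp
      have hmem : k ∈ {k : ℕ | ∃ p : List ℕ, IsLogSparsePath j l p ∧ p.length = k + 1} :=
        ⟨p, hp, hlen⟩
      refine le_trans (Nat.sInf_le hmem) (le_trans hk ?_)
      exact Finset.le_sup (f := fun j' => Nat.log 2 (l - j') + 1) (Finset.mem_range.2 hlt)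
  · refine Finset.sup_le fun j' _ => ?_
    have : Nat.log 2 (l - j') ≤ Nat.log 2 l := Nat.log_mono_right (by omega)
    omega
end
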